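/- Let A, B, S, C, y ∈ ℂ[X] with y = c·∏_{j=1}^n (X − z_j) for some nonzero c ∈ ℂ and pairwise distinct z_1, …, z_n, and suppose the differential equation A·S·y'' + ((A' + B)·S − A·S')·y' + C·y = 0 holds identically in ℂ[X]. Then for every k = 1, …, n with A(z_k) ≠ 0 and S(z_k) ≠ 0: ∑_{j ≠ k} 1/(z_k − z_j) + (A'(z_k) + B(z_k))/(2·A(z_k)) − S'(z_k)/(2·S(z_k)) = 0. -/

import Mathlib

/-!
Write `y = (X - z_k) p` with `p = c ∏_{j ≠ k} (X - z_j)`. Then `y'(z_k) = p(z_k) ≠ 0` and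
`y''(z_k) = 2 p'(z_k)`, so `y''(z_k) / (2 y'(z_k)) = p'(z_k) / p(z_k) = ∑_{j ≠ k} 1 / (z_k - z_j)`.
Since `y(z_k) = 0`, evaluating the differential equation at `z_k` and dividing by `2 A S y'` at `z_k`
gives the equilibrium condition.
-/

open Polynomial Finset

section SimpleRoot

variable {R : Type*} [CommRing R]

theorem derivative_X_sub_C_mul (a : R) (p : R[X]) :
    derivative ((X - C a) * p) = p + (X - C a) * derivative p := by
  rw [derivative_mul, derivative_X_sub_C, one_mul]

theorem eval_derivative_X_sub_C_mul (a : R) (p : R[X]) :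
    (derivative ((X - C a) * p)).eval a = p.eval a := by
  simp

theorem eval_derivative_derivative_X_sub_C_mul (a : R) (p : R[X]) :
    (derivative (derivative ((X - C a) * p))).eval a = 2 * (derivative p).eval a := by
  rw [derivative_X_sub_C_mul, derivative_add, eval_add, eval_derivative_X_sub_C_mul, two_mul]

end SimpleRoot

theorem eval_derivative_prod_X_sub_C {K ι : Type*} [Field K] [DecidableEq ι] (s : Finset ι)
    (z : ι → K) {x : K} (hx : ∀ j ∈ s, x ≠ z j) :
    (derivative (∏ j ∈ s, (X - C (z j)))).eval x =
      (∏ j ∈ s, (X - C (z j))).eval x * ∑ j ∈ s, 1 / (x - z j) := by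
  rw [derivative_prod_finset, eval_finsetSum, mul_sum]
  refine sum_congr rfl fun j hj => ?_
  have hxj : x - z j ≠ 0 := sub_ne_zero.mpr (hx j hj)
  rw [← mul_prod_erase s _ hj, derivative_X_sub_C, mul_one, eval_mul]
  simp only [eval_sub, eval_X, eval_C]
  field_simp

theorem eval_div_two_mul_eq_of_ode {K : Type*} [Field K] [NeZero (2 : K)]
    {A B S Cv y : K[X]} {a : K}
    (hode : A * S * derivative (derivative y) +
      ((derivative A + B) * S - A * derivative S) * derivative y + Cv * y = 0)
    (hy : y.IsRoot a) (hA : A.eval a ≠ 0) (hS : S.eval a ≠ 0)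
    (hy' : (derivative y).eval a ≠ 0) :
    (derivative (derivative y)).eval a / (2 * (derivative y).eval a) +
      ((derivative A).eval a + B.eval a) / (2 * A.eval a) -
      (derivative S).eval a / (2 * S.eval a) = 0 := by
  have hode_a := congrArg (eval a) hode
  simp only [eval_add, eval_mul, eval_sub, hy.eq_zero, mul_zero, add_zero, eval_zero] at hode_a
  field_simp
  linear_combination hode_a

theorem electrostatic_model_from_ode (n : ℕ)
    (A B S Cv y : Polynomial ℂ) (c : ℂ) (hc : c ≠ 0)
    (z : Fin n → ℂ) (hzinj : Function.Injective z)
    (hy : y = Polynomial.C c * ∏ j, (Polynomial.X - Polynomial.C (z j)))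
    (hode : A * S * Polynomial.derivative (Polynomial.derivative y) +
      ((Polynomial.derivative A + B) * S - A * Polynomial.derivative S) *
        Polynomial.derivative y + Cv * y = 0) :
    ∀ k : Fin n, A.eval (z k) ≠ 0 → S.eval (z k) ≠ 0 →
      (∑ j ∈ Finset.univ.erase k, 1 / (z k - z j)) +
        ((Polynomial.derivative A).eval (z k) + B.eval (z k)) / (2 * A.eval (z k)) -
        (Polynomial.derivative S).eval (z k) / (2 * S.eval (z k)) = 0 := by
  intro k hA hS
  have hne : ∀ j ∈ univ.erase k, z k ≠ z j := fun j hj => hzinj.ne (ne_of_mem_erase hj).symm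
  set p := C c * ∏ j ∈ univ.erase k, (X - C (z j))
  have hyp : y = (X - C (z k)) * p := by
    rw [hy, ← mul_prod_erase univ _ (mem_univ k)]
    ring
  have hp : p.eval (z k) ≠ 0 := by
    simpa [p, eval_prod, prod_eq_zero_iff, hc, sub_eq_zero] using hne
  have hlog : (derivative p).eval (z k) = p.eval (z k) * ∑ j ∈ univ.erase k, 1 / (z k - z j) := by
    rw [derivative_C_mul, eval_mul, eval_mul, eval_derivative_prod_X_sub_C _ _ hne, eval_C,
      mul_assoc]
  have hroot : y.IsRoot (z k) := by simp [hyp]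
  have hy' : (derivative y).eval (z k) ≠ 0 := by rwa [hyp, eval_derivative_X_sub_C_mul]
  have hbalance := eval_div_two_mul_eq_of_ode hode hroot hA hS hy'
  rwa [hyp, eval_derivative_X_sub_C_mul, eval_derivative_derivative_X_sub_C_mul, hlog,
    mul_div_mul_left _ _ (two_ne_zero' ℂ), mul_div_cancel_left₀ _ hp] at hbalance
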